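/- Suppose π_τ(k*) ≥ α_{τ-1}(k*_{τ-1})·(1-ε*) and the likelihood ratio bound max_{k≠k*} g_k / g_{k*} ≤ e^{-ℓ*} holds. Then the posterior odds R_τ = (1-α_τ(k*_τ))/α_τ(k*_τ) satisfy R_τ ≤ e^{-ℓ*}·(R_{τ-1} + ε*)/(1-ε*), i.e., R_τ ≤ a R_{τ-1} + b with a = e^{-ℓ*}/(1-ε*) and b = e^{-ℓ*}ε*/(1-ε*). -/
import Mathlib


/-- One-step recursion for the posterior odds in Bayesian filtering on a finite
state space. -/
theorem posterior_odds_recursion {K : ℕ}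
    (p g : Fin K → ℝ) (kstar : Fin K) (ε ℓ αprev : ℝ)
    (hp : ∀ k, 0 ≤ p k) (hpsum : ∑ k, p k = 1)
    (hg : ∀ k, 0 < g k)
    (hε0 : 0 ≤ ε) (hε : ε < 1 / 2) (hℓ : 0 < ℓ)
    (hαprev0 : 0 < αprev) (hαprev1 : αprev ≤ 1)
    (hprior : αprev * (1 - ε) ≤ p kstar)
    (hlik : ∀ k, k ≠ kstar → g k ≤ Real.exp (-ℓ) * g kstar) :
    (1 - (p kstar * g kstar / ∑ j, p j * g j)) /
        (p kstar * g kstar / ∑ j, p j * g j)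
      ≤ Real.exp (-ℓ) / (1 - ε) * ((1 - αprev) / αprev)
        + Real.exp (-ℓ) * ε / (1 - ε) := by
  have hε1 : (0:ℝ) < 1 - ε := by linarith
  have hc : 0 < αprev * (1 - ε) := by positivity
  have hpk : 0 < p kstar := lt_of_lt_of_le hc hprior
  have hA : 0 < p kstar * g kstar := mul_pos hpk (hg kstar)
  set S := ∑ j, p j * g j with hS
  have hSA : p kstar * g kstar ≤ S := by
    apply Finset.single_le_sum (f := fun j => p j * g j)
    · intro i _; exact mul_nonneg (hp i) (hg i).le
    · exact Finset.mem_univ kstar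
  have hSpos : 0 < S := lt_of_lt_of_le hA hSA
  have hrw : (1 - p kstar * g kstar / S) / (p kstar * g kstar / S)
      = (S - p kstar * g kstar) / (p kstar * g kstar) := by
    field_simp
  rw [hrw]
  have hsplit : S - p kstar * g kstar = ∑ j ∈ Finset.univ.erase kstar, p j * g j := by
    rw [hS, ← Finset.add_sum_erase _ _ (Finset.mem_univ kstar)]; ring
  have hsum_le : ∑ j ∈ Finset.univ.erase kstar, p j * g j
      ≤ Real.exp (-ℓ) * g kstar * (1 - p kstar) := by
    have h1 : ∑ j ∈ Finset.univ.erase kstar, p j * g j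
        ≤ ∑ j ∈ Finset.univ.erase kstar, p j * (Real.exp (-ℓ) * g kstar) := by
      apply Finset.sum_le_sum
      intro i hi
      exact mul_le_mul_of_nonneg_left (hlik i (Finset.ne_of_mem_erase hi)) (hp i)
    have h2 : ∑ j ∈ Finset.univ.erase kstar, p j = 1 - p kstar := by
      have := Finset.add_sum_erase Finset.univ p (Finset.mem_univ kstar)
      rw [hpsum] at this
      linarith
    calc ∑ j ∈ Finset.univ.erase kstar, p j * g j
        ≤ ∑ j ∈ Finset.univ.erase kstar, p j * (Real.exp (-ℓ) * g kstar) := h1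
      _ = (∑ j ∈ Finset.univ.erase kstar, p j) * (Real.exp (-ℓ) * g kstar) := by
          rw [Finset.sum_mul]
      _ = Real.exp (-ℓ) * g kstar * (1 - p kstar) := by rw [h2]; ring
  have key : (S - p kstar * g kstar) / (p kstar * g kstar)
      ≤ Real.exp (-ℓ) * (1 - p kstar) / p kstar := by
    rw [div_le_div_iff₀ hA hpk]
    calc (S - p kstar * g kstar) * p kstar
        ≤ (Real.exp (-ℓ) * g kstar * (1 - p kstar)) * p kstar := by
          apply mul_le_mul_of_nonneg_right (by rw [hsplit]; exact hsum_le) hpk.le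
      _ = Real.exp (-ℓ) * (1 - p kstar) * (p kstar * g kstar) := by ring
  refine key.trans ?_
  have he : (0:ℝ) < Real.exp (-ℓ) := Real.exp_pos _
  have hfinal : Real.exp (-ℓ) * (1 - p kstar) / p kstar
      ≤ Real.exp (-ℓ) * (1 - αprev * (1 - ε)) / (αprev * (1 - ε)) := by
    have hinv : 1 / p kstar ≤ 1 / (αprev * (1 - ε)) :=
      one_div_le_one_div_of_le hc hprior
    have hmono : (1 - p kstar) / p kstar ≤ (1 - αprev * (1 - ε)) / (αprev * (1 - ε)) := by
      rw [sub_div, sub_div, div_self hpk.ne', div_self hc.ne']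
      linarith
    calc Real.exp (-ℓ) * (1 - p kstar) / p kstar
        = Real.exp (-ℓ) * ((1 - p kstar) / p kstar) := by ring
      _ ≤ Real.exp (-ℓ) * ((1 - αprev * (1 - ε)) / (αprev * (1 - ε))) :=
          mul_le_mul_of_nonneg_left hmono he.le
      _ = _ := by ring
  refine hfinal.trans_eq ?_
  field_simp
  ring
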